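/- For all positive integers s and t, K(s,t) < K'(s,t) and 2^s·K'(s,t) < (2^s + 8)·K(s,t); equivalently, 1 < K'(s,t)/K(s,t) < 1 + 2^(3−s). -/
import Mathlib


/-- The pair `(K(s,t), K'(s,t))` of auxiliary functions, defined for positive integers `s, t`:
`K(1,t) = 2`, `K'(1,t) = 5`; `K(s,1) = 2^s`, `K'(s,1) = 2^s + 3`; and for `s, t > 1`,
`K(s,t) = K(s,t-1) * K(s-1, K'(s,t-1))` and
`K'(s,t) = K'(s,t-1) * K(s-1, K'(s,t-1)) + K'(s-1, K'(s,t-1))`.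
(The value at arguments equal to `0` is junk.) -/
def KK : ℕ → ℕ → ℕ × ℕ
  | 0, _ => (0, 0)
  | 1, _ => (2, 5)
  | _+2, 0 => (0, 0)
  | s+2, 1 => (2^(s+2), 2^(s+2) + 3)
  | s+2, t+2 =>
    let p := KK (s+2) (t+1)
    let q := KK (s+1) p.2
    (p.1 * q.1, p.2 * q.1 + q.2)
termination_by s t => (s, t)

/-- The function `K(s,t)`. -/
def K (s t : ℕ) : ℕ := (KK s t).1

/-- The function `K'(s,t)`. -/
def K' (s t : ℕ) : ℕ := (KK s t).2

/-- Strengthened invariant proved by strong induction. -/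
theorem KK_main : ∀ s t : ℕ, 0 < s → 0 < t →
    0 < (KK s t).1 ∧ (KK s t).1 < (KK s t).2 ∧
      2 ^ s * (KK s t).2 + 5 * 2 ^ s ≤ (2 ^ s + 8) * (KK s t).1
  | 0, _, hs, _ => absurd hs (by simp)
  | 1, t, _, _ => by simp [KK]
  | s+2, 0, _, ht => absurd ht (by simp)
  | s+2, 1, _, _ => by
      simp only [KK]
      refine ⟨by positivity, by omega, by ring_nf; omega⟩
  | s+2, t+2, _, _ => by
      have ih1 := KK_main (s+2) (t+1) (by omega) (by omega)
      obtain ⟨hp1, hp2, hp3⟩ := ih1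
      have ih2 := KK_main (s+1) (KK (s+2) (t+1)).2 (by omega) (by omega)
      obtain ⟨hq1, hq2, hq3⟩ := ih2
      set p1 := (KK (s+2) (t+1)).1 with hP1
      set p2 := (KK (s+2) (t+1)).2 with hP2
      set q1 := (KK (s+1) p2).1 with hQ1
      set q2 := (KK (s+1) p2).2 with hQ2
      have hKK : KK (s+2) (t+2) = (p1 * q1, p2 * q1 + q2) := by
        rw [KK]
      rw [hKK]
      refine ⟨by positivity, ?_, ?_⟩
      · calc p1 * q1 < p2 * q1 := by exact Nat.mul_lt_mul_of_lt_of_le hp2 le_rfl hq1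
          _ ≤ p2 * q1 + q2 := Nat.le_add_right _ _
      · have h2 : (2:ℕ) ≤ 2 ^ (s+1) := by
          calc (2:ℕ) = 2^1 := rfl
          _ ≤ 2^(s+1) := Nat.pow_le_pow_right (by norm_num) (by omega)
      -- q2 + 5 ≤ 5 * q1
        have hk : 2^(s+1) * q2 + 5 * 2^(s+1) ≤ 5 * 2^(s+1) * q1 := by
          calc 2^(s+1) * q2 + 5 * 2^(s+1) ≤ (2^(s+1) + 8) * q1 := hq3
            _ ≤ 5 * 2^(s+1) * q1 := by nlinarith
        have hq5 : q2 + 5 ≤ 5 * q1 := by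
          have hpos : 0 < 2^(s+1) := by positivity
          nlinarith
        have hs2 : (2:ℕ)^(s+2) = 2 * 2^(s+1) := by ring
        calc 2^(s+2) * (p2 * q1 + q2) + 5 * 2^(s+2)
            = 2^(s+2) * p2 * q1 + 2^(s+2) * (q2 + 5) := by ring
          _ ≤ 2^(s+2) * p2 * q1 + 2^(s+2) * (5 * q1) := by
              exact Nat.add_le_add_left (Nat.mul_le_mul_left _ hq5) _
          _ = (2^(s+2) * p2 + 5 * 2^(s+2)) * q1 := by ring
          _ ≤ ((2^(s+2) + 8) * p1) * q1 := Nat.mul_le_mul_right _ hp3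
          _ = (2^(s+2) + 8) * (p1 * q1) := by ring
termination_by s t => (s, t)

/-- Lemma (K-quotient): for all positive integers `s` and `t`,
`1 < K'(s,t)/K(s,t) < 1 + 2^(3-s)`; in integer form, `K(s,t) < K'(s,t)` and
`2^s * K'(s,t) < (2^s + 8) * K(s,t)`. -/
theorem K'_div_K_bounds (s t : ℕ) (hs : 0 < s) (ht : 0 < t) :
    K s t < K' s t ∧ 2 ^ s * K' s t < (2 ^ s + 8) * K s t := by
  obtain ⟨h1, h2, h3⟩ := KK_main s t hs ht
  have hpow : 0 < 5 * 2 ^ s := by positivity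
  exact ⟨h2, by unfold K K'; omega⟩
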